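/- For every semantically deterministic nondeterministic weak automaton A with state set Q, there exists an equivalent deterministic weak automaton D whose state set is a subset of Q, and D can be constructed in polynomial time. -/
import Mathlib


open Filter

variable {A Q : Type}

/-- Extension of a transition function to sets of states and finite words. -/
def extSet (δ : Q → A → Set Q) : Set Q → List A → Set Q
  | S, [] => S
  | S, a :: u => extSet δ (⋃ q ∈ S, δ q a) u

/-- A (state-based) nondeterministic Büchi automaton with a single initial
state and a total transition function. -/
structure NBW (A Q : Type) where
  q0 : Q
  δ : Q → A → Set Q
  α : Set Q
  δ_nonempty : ∀ q a, (δ q a).Nonempty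

namespace NBW

/-- `L(A^q)`: words having a run from `q` visiting `α` infinitely often. -/
def LangFrom (M : NBW A Q) (q : Q) : Set (ℕ → A) :=
  {w | ∃ r : ℕ → Q, r 0 = q ∧ (∀ i, r (i + 1) ∈ M.δ (r i) (w i)) ∧
    ∃ᶠ i in atTop, r i ∈ M.α}

def Lang (M : NBW A Q) : Set (ℕ → A) := M.LangFrom M.q0

/-- `q'` is reachable from `q`. -/
def Reach (M : NBW A Q) (q q' : Q) : Prop :=
  ∃ u : List A, q' ∈ extSet M.δ {q} u

/-- The automaton is weak: every strongly connected component is contained in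
`α` or disjoint from `α`, i.e. mutually reachable states agree on `α`. -/
def Weak (M : NBW A Q) : Prop :=
  ∀ q q', M.Reach q q' → M.Reach q' q → (q ∈ M.α ↔ q' ∈ M.α)

/-- Semantic determinism: all σ-successors of any state are
language-equivalent. -/
def SD (M : NBW A Q) : Prop :=
  ∀ q a, ∀ q₁ ∈ M.δ q a, ∀ q₂ ∈ M.δ q a, M.LangFrom q₁ = M.LangFrom q₂

end NBW

/-- A (state-based) deterministic Büchi automaton. -/
structure DBW (A Q : Type) where
  q0 : Q
  δ : Q → A → Q
  α : Set Q

namespace DBW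

def run (D : DBW A Q) (w : ℕ → A) : ℕ → Q
  | 0 => D.q0
  | i + 1 => D.δ (D.run w i) (w i)

def Lang (D : DBW A Q) : Set (ℕ → A) :=
  {w | ∃ᶠ i in atTop, D.run w i ∈ D.α}

def Reach (D : DBW A Q) (q q' : Q) : Prop :=
  ∃ u : List A, List.foldl D.δ q u = q'

/-- The deterministic automaton is weak. -/
def Weak (D : DBW A Q) : Prop :=
  ∀ q q', D.Reach q q' → D.Reach q' q → (q ∈ D.α ↔ q' ∈ D.α)

end DBW

noncomputable section SDDetAux

open Filter

/-- Deterministic pruning of the transition function (choice of a successor). -/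
noncomputable def ddel (M : NBW A Q) : Q → A → Q := fun q a => (M.δ_nonempty q a).some

lemma ddel_mem (M : NBW A Q) (q : Q) (a : A) : ddel M q a ∈ M.δ q a :=
  (M.δ_nonempty q a).some_mem

/-- The deterministic run of the pruned automaton. -/
noncomputable def drun (M : NBW A Q) (q : Q) (w : ℕ → A) : ℕ → Q
  | 0 => q
  | i + 1 => ddel M (drun M q w i) (w i)

/-- Reachability in the pruned automaton. -/
def DR (M : NBW A Q) (q q' : Q) : Prop := ∃ u : List A, List.foldl (ddel M) q u = q'

def MutD (M : NBW A Q) (q q' : Q) : Prop := DR M q q' ∧ DR M q' q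

/-- The deterministic run from `q` on `w` stays (from time 0) in the
D-strongly-connected component of `q`. -/
def T0 (M : NBW A Q) (q : Q) (w : ℕ → A) : Prop := ∀ i, MutD M q (drun M q w i)

/-- The new acceptance set. -/
def alphaD (M : NBW A Q) : Set Q := {q | ∀ w, T0 M q w → w ∈ M.LangFrom q}

def wshift (w : ℕ → A) (k : ℕ) : ℕ → A := fun i => w (k + i)

def wcons (a : A) (w : ℕ → A) : ℕ → A := fun n => Nat.casesOn n a w

def IsRun (M : NBW A Q) (τ : ℕ → Q) (w : ℕ → A) : Prop :=
  ∀ i, τ (i + 1) ∈ M.δ (τ i) (w i)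

lemma wshift_zero (w : ℕ → A) : wshift w 0 = w := by
  funext i; simp [wshift]

lemma wshift_wshift (w : ℕ → A) (k m : ℕ) : wshift (wshift w k) m = wshift w (k + m) := by
  funext i; simp [wshift, Nat.add_assoc]

lemma wcons_shift (w : ℕ → A) : wcons (w 0) (wshift w 1) = w := by
  funext n; cases n with
  | zero => rfl
  | succ n =>
    show w (1 + n) = w (n + 1)
    rw [Nat.add_comm]

lemma drun_isRun (M : NBW A Q) (q : Q) (w : ℕ → A) : IsRun M (drun M q w) w :=
  fun _ => ddel_mem M _ _

lemma isRun_shift {M : NBW A Q} {τ : ℕ → Q} {w : ℕ → A} (hτ : IsRun M τ w) (k : ℕ) :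
    IsRun M (fun i => τ (k + i)) (wshift w k) := by
  intro i
  show τ (k + (i + 1)) ∈ M.δ (τ (k + i)) (w (k + i))
  rw [Nat.add_succ]
  exact hτ (k + i)

lemma drun_add (M : NBW A Q) (q : Q) (w : ℕ → A) (N : ℕ) :
    ∀ i, drun M q w (N + i) = drun M (drun M q w N) (wshift w N) i := by
  intro i
  induction i with
  | zero => rfl
  | succ i ih =>
    have h1 : N + (i + 1) = (N + i) + 1 := rfl
    rw [h1]
    show ddel M (drun M q w (N + i)) (w (N + i)) = _
    rw [ih]
    rfl

/-- Membership step lemma (the key use of semantic determinism). -/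
lemma key_step (M : NBW A Q) (hSD : M.SD) {q q' : Q} {a : A} (h : q' ∈ M.δ q a)
    (z : ℕ → A) : z ∈ M.LangFrom q' ↔ wcons a z ∈ M.LangFrom q := by
  constructor
  · rintro ⟨r, hr0, hrs, hrf⟩
    refine ⟨fun n => Nat.casesOn n q r, rfl, ?_, ?_⟩
    · intro i
      cases i with
      | zero =>
        show r 0 ∈ M.δ q a
        rw [hr0]; exact h
      | succ i => exact hrs i
    · rw [frequently_atTop] at hrf ⊢
      intro n
      obtain ⟨b, hb, hbα⟩ := hrf n
      exact ⟨b + 1, le_trans hb (Nat.le_succ b), hbα⟩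
  · rintro ⟨r, hr0, hrs, hrf⟩
    have h1 : r 1 ∈ M.δ q a := by
      have := hrs 0
      rwa [hr0] at this
    have hz : z ∈ M.LangFrom (r 1) := by
      refine ⟨fun i => r (i + 1), rfl, fun i => hrs (i + 1), ?_⟩
      rw [frequently_atTop] at hrf ⊢
      intro n
      obtain ⟨b, hb, hbα⟩ := hrf (n + 1)
      refine ⟨b - 1, by omega, ?_⟩
      show r (b - 1 + 1) ∈ M.α
      have hb1 : b - 1 + 1 = b := by omega
      rw [hb1]; exact hbα
    have heq := hSD q a (r 1) h1 q' h
    rwa [heq] at hz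

lemma mem_step {M : NBW A Q} (hSD : M.SD) {τ : ℕ → Q} {w : ℕ → A} (hτ : IsRun M τ w) :
    w ∈ M.LangFrom (τ 0) ↔ wshift w 1 ∈ M.LangFrom (τ 1) := by
  have h := key_step M hSD (hτ 0) (wshift w 1)
  rw [wcons_shift] at h
  exact h.symm

lemma mem_shift {M : NBW A Q} (hSD : M.SD) {τ : ℕ → Q} {w : ℕ → A} (hτ : IsRun M τ w)
    (k : ℕ) : w ∈ M.LangFrom (τ 0) ↔ wshift w k ∈ M.LangFrom (τ k) := by
  induction k with
  | zero => rw [wshift_zero]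
  | succ k ih =>
    rw [ih]
    have h := mem_step hSD (isRun_shift hτ k)
    simp only [Nat.add_zero] at h
    rw [wshift_wshift] at h
    exact h

lemma req_step {M : NBW A Q} (hSD : M.SD) {p r p' r' : Q} {a : A}
    (hpr : M.LangFrom p = M.LangFrom r) (hp : p' ∈ M.δ p a) (hr : r' ∈ M.δ r a) :
    M.LangFrom p' = M.LangFrom r' := by
  ext z
  rw [key_step M hSD hp z, key_step M hSD hr z, hpr]

lemma req_iter {M : NBW A Q} (hSD : M.SD) {τ σ : ℕ → Q} {w : ℕ → A}
    (hpr : M.LangFrom (τ 0) = M.LangFrom (σ 0)) (hτ : IsRun M τ w) (hσ : IsRun M σ w) :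
    ∀ k, M.LangFrom (τ k) = M.LangFrom (σ k) := by
  intro k
  induction k with
  | zero => exact hpr
  | succ k ih => exact req_step hSD ih (hτ k) (hσ k)

end SDDetAux

section SDDetAux2

open Filter

variable {M : NBW A Q}

lemma extSet_mono {δ : Q → A → Set Q} :
    ∀ (u : List A) {S T : Set Q}, S ⊆ T → extSet δ S u ⊆ extSet δ T u
  | [], _, _, h => h
  | a :: u, S, T, h => by
    show extSet δ (⋃ q ∈ S, δ q a) u ⊆ extSet δ (⋃ q ∈ T, δ q a) u
    exact extSet_mono u (Set.biUnion_subset_biUnion_left h)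

lemma extSet_append {δ : Q → A → Set Q} :
    ∀ (u v : List A) (S : Set Q), extSet δ S (u ++ v) = extSet δ (extSet δ S u) v
  | [], v, S => rfl
  | a :: u, v, S => by
    show extSet δ (⋃ q ∈ S, δ q a) (u ++ v) = _
    exact extSet_append u v _

lemma reach_refl (M : NBW A Q) (q : Q) : M.Reach q q := ⟨[], rfl⟩

lemma reach_trans {q q' q'' : Q} (h1 : M.Reach q q') (h2 : M.Reach q' q'') :
    M.Reach q q'' := by
  obtain ⟨u, hu⟩ := h1
  obtain ⟨v, hv⟩ := h2
  refine ⟨u ++ v, ?_⟩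
  rw [extSet_append]
  exact extSet_mono v (Set.singleton_subset_iff.mpr hu) hv

lemma reach_single {q q' : Q} {a : A} (h : q' ∈ M.δ q a) : M.Reach q q' := by
  refine ⟨[a], ?_⟩
  show q' ∈ ⋃ p ∈ ({q} : Set Q), M.δ p a
  simp only [Set.mem_singleton_iff, Set.iUnion_iUnion_eq_left]
  exact h

lemma run_reach {τ : ℕ → Q} {w : ℕ → A} (hτ : IsRun M τ w) (j : ℕ) :
    ∀ i, M.Reach (τ j) (τ (j + i)) := by
  intro i
  induction i with
  | zero => exact reach_refl M _
  | succ i ih => exact reach_trans ih (reach_single (hτ (j + i)))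

lemma run_reach' {τ : ℕ → Q} {w : ℕ → A} (hτ : IsRun M τ w) {j k : ℕ} (h : j ≤ k) :
    M.Reach (τ j) (τ k) := by
  have := run_reach hτ j (k - j)
  rwa [show j + (k - j) = k by omega] at this

lemma dr_refl (M : NBW A Q) (q : Q) : DR M q q := ⟨[], rfl⟩

lemma dr_trans {q q' q'' : Q} (h1 : DR M q q') (h2 : DR M q' q'') : DR M q q'' := by
  obtain ⟨u, hu⟩ := h1
  obtain ⟨v, hv⟩ := h2
  exact ⟨u ++ v, by rw [List.foldl_append, hu, hv]⟩

lemma mutd_refl (M : NBW A Q) (q : Q) : MutD M q q := ⟨dr_refl M q, dr_refl M q⟩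

lemma mutd_symm {q q' : Q} (h : MutD M q q') : MutD M q' q := ⟨h.2, h.1⟩

lemma mutd_trans {q q' q'' : Q} (h1 : MutD M q q') (h2 : MutD M q' q'') : MutD M q q'' :=
  ⟨dr_trans h1.1 h2.1, dr_trans h2.2 h1.2⟩

lemma foldl_mem_extSet : ∀ (u : List A) (q : Q),
    List.foldl (ddel M) q u ∈ extSet M.δ {q} u
  | [], q => rfl
  | a :: u, q => by
    show List.foldl (ddel M) (ddel M q a) u ∈ extSet M.δ (⋃ p ∈ ({q} : Set Q), M.δ p a) u
    refine extSet_mono u ?_ (foldl_mem_extSet u (ddel M q a))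
    intro x hx
    simp only [Set.mem_singleton_iff] at hx
    subst hx
    simp only [Set.mem_singleton_iff, Set.iUnion_iUnion_eq_left]
    exact ddel_mem M q a

lemma reach_of_dr {q q' : Q} (h : DR M q q') : M.Reach q q' := by
  obtain ⟨u, hu⟩ := h
  exact ⟨u, hu ▸ foldl_mem_extSet u q⟩

lemma dr_drun (M : NBW A Q) (q : Q) (w : ℕ → A) {i j : ℕ} (h : i ≤ j) :
    DR M (drun M q w i) (drun M q w j) := by
  have key : ∀ k, DR M (drun M q w i) (drun M q w (i + k)) := by
    intro k
    induction k with
    | zero => exact dr_refl M _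
    | succ k ih =>
      refine dr_trans ih ⟨[w (i + k)], rfl⟩
  have := key (j - i)
  rwa [show i + (j - i) = j by omega] at this

lemma dr_drun0 (M : NBW A Q) (q : Q) (w : ℕ → A) (j : ℕ) : DR M q (drun M q w j) :=
  dr_drun M q w (Nat.zero_le j)

/-- Pigeonhole: every deterministic run is eventually trapped in a D-SCC. -/
lemma exists_trap [Fintype Q] (M : NBW A Q) (q : Q) (w : ℕ → A) :
    ∃ N, ∀ i, N ≤ i → MutD M (drun M q w N) (drun M q w i) := by
  have hx : ∃ x : Q, ∀ n, ∃ i, n ≤ i ∧ drun M q w i = x := by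
    by_contra hcon
    push_neg at hcon
    choose F hF using hcon
    set B := Finset.univ.sup F with hB
    exact hF (drun M q w B) B (Finset.le_sup (Finset.mem_univ _)) rfl
  obtain ⟨x, hx⟩ := hx
  obtain ⟨N, -, hN⟩ := hx 0
  refine ⟨N, fun i hi => ⟨dr_drun M q w hi, ?_⟩⟩
  obtain ⟨j, hj, hjx⟩ := hx i
  have h1 : DR M (drun M q w i) (drun M q w j) := dr_drun M q w hj
  rw [hjx, ← hN] at h1
  exact h1

/-- Prepend a finite word to an infinite word. -/
def wprepend : List A → (ℕ → A) → (ℕ → A)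
  | [], w => w
  | a :: u, w => wcons a (wprepend u w)

lemma drun_wcons (M : NBW A Q) (q : Q) (a : A) (z : ℕ → A) :
    ∀ i, drun M q (wcons a z) (i + 1) = drun M (ddel M q a) z i := by
  intro i
  induction i with
  | zero => rfl
  | succ i ih =>
    show ddel M (drun M q (wcons a z) (i + 1)) (wcons a z (i + 1)) = _
    rw [ih]
    rfl

lemma mem_wprepend (hSD : M.SD) (w : ℕ → A) :
    ∀ (u : List A) (q : Q),
      wprepend u w ∈ M.LangFrom q ↔ w ∈ M.LangFrom (List.foldl (ddel M) q u)
  | [], q => Iff.rfl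
  | a :: u, q => by
    show wcons a (wprepend u w) ∈ M.LangFrom q ↔ _
    rw [← key_step M hSD (ddel_mem M q a) (wprepend u w)]
    exact mem_wprepend hSD w u (ddel M q a)

lemma drun_wprepend_ge (w : ℕ → A) :
    ∀ (u : List A) (q : Q) (i : ℕ),
      drun M q (wprepend u w) (u.length + i) = drun M (List.foldl (ddel M) q u) w i
  | [], q, i => by simp [wprepend]
  | a :: u, q, i => by
    show drun M q (wcons a (wprepend u w)) (u.length + 1 + i) = _
    rw [show u.length + 1 + i = (u.length + i) + 1 by omega]
    rw [drun_wcons]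
    exact drun_wprepend_ge w u (ddel M q a) i

lemma drun_wprepend_le (w : ℕ → A) :
    ∀ (u : List A) (q : Q) (j : ℕ), j ≤ u.length →
      drun M q (wprepend u w) j = List.foldl (ddel M) q (u.take j)
  | [], q, j, hj => by
    have : j = 0 := by simpa using hj
    subst this
    rfl
  | a :: u, q, 0, hj => rfl
  | a :: u, q, j + 1, hj => by
    show drun M q (wcons a (wprepend u w)) (j + 1) = _
    rw [drun_wcons]
    rw [drun_wprepend_le w u (ddel M q a) j (by simpa using hj)]
    rfl

lemma t0_wprepend {u : List A} {q q' : Q} {w : ℕ → A}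
    (hu : List.foldl (ddel M) q' u = q) (hq : MutD M q q') (hw : T0 M q w) :
    T0 M q' (wprepend u w) := by
  intro i
  rcases le_or_gt u.length i with hi | hi
  · have heq : drun M q' (wprepend u w) i = drun M q w (i - u.length) := by
      rw [show i = u.length + (i - u.length) by omega, drun_wprepend_ge, hu]
      congr 1
      omega
    rw [heq]
    exact mutd_trans (mutd_symm hq) (hw (i - u.length))
  · rw [drun_wprepend_le w u q' i (le_of_lt hi)]
    constructor
    · exact ⟨u.take i, rfl⟩
    · refine dr_trans ⟨u.drop i, ?_⟩ hq.1
      rw [← List.foldl_append, List.take_append_drop, hu]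

lemma acct_transfer (hSD : M.SD) {c c' : Q} (h : MutD M c c')
    (hA : ∃ v, v ∈ M.LangFrom c ∧ T0 M c v) : ∃ v, v ∈ M.LangFrom c' ∧ T0 M c' v := by
  obtain ⟨v, hv, hT⟩ := hA
  obtain ⟨u, hu⟩ := h.2
  refine ⟨wprepend u v, ?_, t0_wprepend hu h hT⟩
  rw [mem_wprepend hSD v u c', hu]
  exact hv

lemma rejt_transfer (hSD : M.SD) {c c' : Q} (h : MutD M c c')
    (hA : ∃ w, w ∉ M.LangFrom c ∧ T0 M c w) : ∃ w, w ∉ M.LangFrom c' ∧ T0 M c' w := by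
  obtain ⟨v, hv, hT⟩ := hA
  obtain ⟨u, hu⟩ := h.2
  refine ⟨wprepend u v, ?_, t0_wprepend hu h hT⟩
  rw [mem_wprepend hSD v u c', hu]
  exact hv

/-- A trapped run through an `α`-state is accepting (uses weakness). -/
lemma mem_of_t0_alpha (hweak : M.Weak) {q : Q} {w : ℕ → A}
    (hα : q ∈ M.α) (hT : T0 M q w) : w ∈ M.LangFrom q := by
  refine ⟨drun M q w, rfl, drun_isRun M q w, ?_⟩
  have hall : ∀ i, drun M q w i ∈ M.α := by
    intro i
    exact (hweak q _ (reach_of_dr (hT i).1) (reach_of_dr (hT i).2)).mp hα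
  exact Filter.Frequently.of_forall hall

end SDDetAux2

section SDDetMain

open Filter

variable {M : NBW A Q}

/-- Concatenation of two runs. -/
def runcat (ρ e : ℕ → Q) (k : ℕ) : ℕ → Q := fun i => if i < k then ρ i else e (i - k)

lemma runcat_zero {ρ e : ℕ → Q} {k : ℕ} (hke : e 0 = ρ k) : runcat ρ e k 0 = ρ 0 := by
  rcases Nat.eq_zero_or_pos k with h | h
  · subst h
    simpa [runcat] using hke
  · simp [runcat, h]

lemma runcat_ge (ρ e : ℕ → Q) (k m : ℕ) : runcat ρ e k (k + m) = e m := by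
  simp [runcat, Nat.not_lt.mpr (Nat.le_add_right k m), Nat.add_sub_cancel_left]

lemma isRun_runcat {ρ e : ℕ → Q} {w : ℕ → A} {k : ℕ} (hρ : IsRun M ρ w)
    (he : IsRun M e (wshift w k)) (hke : e 0 = ρ k) : IsRun M (runcat ρ e k) w := by
  intro i
  by_cases h1 : i + 1 < k
  · have h2 : i < k := by omega
    simp only [runcat, if_pos h1, if_pos h2]
    exact hρ i
  · by_cases h2 : i < k
    · have hik : i + 1 = k := by omega
      simp only [runcat, if_neg h1, if_pos h2]
      rw [show i + 1 - k = 0 by omega, hke, ← hik]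
      exact hρ i
    · simp only [runcat, if_neg h1, if_neg h2]
      have h3 : i + 1 - k = (i - k) + 1 := by omega
      rw [h3]
      have hw : wshift w k (i - k) = w i := by
        have hik : k + (i - k) = i := by omega
        simp [wshift, hik]
      have := he (i - k)
      rwa [hw] at this

lemma nR_lt [Fintype Q] {y y' : Q} (h1 : M.Reach y y') (h2 : ¬ M.Reach y' y) :
    Set.ncard {p | M.Reach y' p} < Set.ncard {p | M.Reach y p} := by
  apply Set.ncard_lt_ncard _ (Set.toFinite _)
  constructor
  · intro p hp
    exact reach_trans h1 hp
  · intro hsub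
    exact h2 (hsub (reach_refl M y))

lemma nR_le [Fintype Q] {y y' : Q} (h1 : M.Reach y y') :
    Set.ncard {p | M.Reach y' p} ≤ Set.ncard {p | M.Reach y p} :=
  Set.ncard_le_ncard (fun _ hp => reach_trans h1 hp) (Set.toFinite _)

/-- The main inductive argument (alternating descent). -/
lemma keyP [Fintype Q] (M : NBW A Q) (hweak : M.Weak) (hSD : M.SD) :
    ∀ (n : ℕ) (y : Q), Set.ncard {p | M.Reach y p} ≤ n → y ∉ M.α →
    ∀ c : Q, M.LangFrom y = M.LangFrom c →
      (∃ v, v ∈ M.LangFrom c ∧ T0 M c v) →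
      (∃ w, w ∉ M.LangFrom c ∧ T0 M c w) → False := by
  intro n
  induction n with
  | zero =>
    intro y hy
    have hpos : 0 < Set.ncard {p | M.Reach y p} :=
      (Set.ncard_pos (Set.toFinite _)).mpr ⟨y, reach_refl M y⟩
    exact absurd hy (by omega)
  | succ n ih =>
    intro y hny hyα c hyc hAcc hRej
    obtain ⟨v, hvc, hTv⟩ := hAcc
    obtain ⟨w0, hw0c, hTw0⟩ := hRej
    have hvy : v ∈ M.LangFrom y := by rw [hyc]; exact hvc
    obtain ⟨ρ, hρ0, hρs, hρf⟩ := hvy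
    have hρrun : IsRun M ρ v := hρs
    obtain ⟨k, hkα⟩ := hρf.exists
    set x₁ := ρ k with hx₁
    obtain ⟨m, hm⟩ := exists_trap M x₁ (wshift v k)
    set e := drun M x₁ (wshift v k) with he
    set y' := e m with hy'def
    set τ := runcat ρ e k with hτdef
    have hke : e 0 = ρ k := rfl
    have hτ : IsRun M τ v := isRun_runcat hρrun (drun_isRun M x₁ (wshift v k)) hke
    have hτ0 : τ 0 = y := by rw [hτdef, runcat_zero hke, hρ0]
    have hτkm : τ (k + m) = y' := runcat_ge ρ e k m
    set c' := drun M c v (k + m) with hc'def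
    have hyc' : M.LangFrom y' = M.LangFrom c' := by
      have h0 : M.LangFrom (τ 0) = M.LangFrom (drun M c v 0) := by rw [hτ0]; exact hyc
      have := req_iter hSD h0 hτ (drun_isRun M c v) (k + m)
      rwa [hτkm] at this
    have hvy2 : v ∈ M.LangFrom (τ 0) := by
      rw [hτ0, hyc]; exact hvc
    have hv'y' : wshift v (k + m) ∈ M.LangFrom y' := by
      have := (mem_shift hSD hτ (k + m)).mp hvy2
      rwa [hτkm] at this
    have hTv' : T0 M y' (wshift v (k + m)) := by
      intro i
      have hdi : drun M y' (wshift v (k + m)) i = e (m + i) := by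
        rw [hy'def, he, ← wshift_wshift, ← drun_add]
      rw [hdi]
      exact hm (m + i) (Nat.le_add_right m i)
    have hMcc' : MutD M c c' := hTv (k + m)
    have hyx₁ : M.Reach y x₁ := by
      have := run_reach' hρrun (Nat.zero_le k)
      rwa [hρ0] at this
    have hx₁y' : M.Reach x₁ y' := run_reach' (drun_isRun M x₁ (wshift v k)) (Nat.zero_le m)
    have hyy' : M.Reach y y' := reach_trans hyx₁ hx₁y'
    have hnreach : ¬ M.Reach y' y := by
      intro hcon
      exact hyα ((hweak y x₁ hyx₁ (reach_trans hx₁y' hcon)).mpr hkα)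
    have hlt : Set.ncard {p | M.Reach y' p} < Set.ncard {p | M.Reach y p} :=
      nR_lt hyy' hnreach
    have hAcc' := acct_transfer hSD hMcc' ⟨v, hvc, hTv⟩
    obtain ⟨w', hw'c', hTw'⟩ := rejt_transfer hSD hMcc' ⟨w0, hw0c, hTw0⟩
    have hw'y' : w' ∉ M.LangFrom y' := by rw [hyc']; exact hw'c'
    obtain ⟨t, ht⟩ := exists_trap M y' w'
    set f := drun M y' w' with hfdef
    set y'' := f t with hy''def
    set c'' := drun M c' w' t with hc''def
    have hy''c'' : M.LangFrom y'' = M.LangFrom c'' :=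
      req_iter hSD hyc' (drun_isRun M y' w') (drun_isRun M c' w') t
    have hw''y'' : wshift w' t ∉ M.LangFrom y'' := by
      intro hcon
      exact hw'y' ((mem_shift hSD (drun_isRun M y' w') t).mpr hcon)
    have hTw'' : T0 M y'' (wshift w' t) := by
      intro i
      have hdi : drun M y'' (wshift w' t) i = f (t + i) := by
        rw [hy''def, hfdef, ← drun_add]
      rw [hdi]
      exact ht (t + i) (Nat.le_add_right t i)
    have hMc'c'' : MutD M c' c'' := hTw' t
    by_cases hy''α : y'' ∈ M.α
    · exact hw''y'' (mem_of_t0_alpha hweak hy''α hTw'')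
    · by_cases hdr : DR M y'' y'
      · have hTw'y' : T0 M y' w' := by
          intro i
          rcases le_or_gt t i with hti | hti
          · exact ⟨dr_drun0 M y' w' i, dr_trans (ht i hti).2 hdr⟩
          · exact ⟨dr_drun0 M y' w' i,
              dr_trans (dr_drun M y' w' (le_of_lt hti)) hdr⟩
        by_cases hy'α : y' ∈ M.α
        · exact hw'y' (mem_of_t0_alpha hweak hy'α hTw'y')
        · exact ih y' (by omega) hy'α y' rfl ⟨_, hv'y', hTv'⟩ ⟨w', hw'y', hTw'y'⟩
      · have hle : Set.ncard {p | M.Reach y'' p} ≤ Set.ncard {p | M.Reach y' p} :=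
          nR_le (run_reach' (drun_isRun M y' w') (Nat.zero_le t))
        exact ih y'' (by omega) hy''α c'' hy''c''
          (acct_transfer hSD hMc'c'' hAcc')
          (rejt_transfer hSD hMc'c'' ⟨w', hw'c', hTw'⟩)

/-- Corollary: a state with an accepted trapped word accepts every trapped word. -/
lemma cor_trapped [Fintype Q] (M : NBW A Q) (hweak : M.Weak) (hSD : M.SD)
    {x : Q} {v w : ℕ → A} (hv : v ∈ M.LangFrom x) (hTv : T0 M x v) (hTw : T0 M x w) :
    w ∈ M.LangFrom x := by
  by_cases hx : x ∈ M.α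
  · exact mem_of_t0_alpha hweak hx hTw
  · by_contra hcon
    exact keyP M hweak hSD (Set.ncard {p | M.Reach x p}) x le_rfl hx x rfl
      ⟨v, hv, hTv⟩ ⟨w, hcon, hTw⟩

end SDDetMain

/-- Every semantically deterministic nondeterministic weak automaton has an
equivalent deterministic weak automaton over (a subset of) the same state
set. -/
theorem sd_nww_determinization [Fintype Q] (M : NBW A Q)
    (hweak : M.Weak) (hSD : M.SD) :
    ∃ D : DBW A Q, D.Weak ∧ D.Lang = M.Lang := by
  classical
  refine ⟨⟨M.q0, ddel M, alphaD M⟩, ?_, ?_⟩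
  · -- Weakness of the deterministic automaton
    have key : ∀ q q', MutD M q q' → q ∈ alphaD M → q' ∈ alphaD M := by
      intro q q' hmut hq w hTw
      obtain ⟨u, hu⟩ := hmut.1
      have hT : T0 M q (wprepend u w) := t0_wprepend hu (mutd_symm hmut) hTw
      have hmem : wprepend u w ∈ M.LangFrom q := hq _ hT
      rw [mem_wprepend hSD w u q, hu] at hmem
      exact hmem
    intro q q' h1 h2
    have hd1 : DR M q q' := h1
    have hd2 : DR M q' q := h2
    exact ⟨fun hq => key q q' ⟨hd1, hd2⟩ hq, fun hq' => key q' q ⟨hd2, hd1⟩ hq'⟩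
  · -- Language equality
    have hrun : ∀ (w : ℕ → A) (i : ℕ),
        (⟨M.q0, ddel M, alphaD M⟩ : DBW A Q).run w i = drun M M.q0 w i := by
      intro w i
      induction i with
      | zero => rfl
      | succ i ih => simp only [DBW.run, drun, ih]
    ext w
    constructor
    · intro hw
      have hfreq : ∃ᶠ i in Filter.atTop, drun M M.q0 w i ∈ alphaD M := by
        have := hw
        simp only [DBW.Lang, Set.mem_setOf_eq, hrun] at this
        exact this
      obtain ⟨N, hN⟩ := exists_trap M M.q0 w
      rw [Filter.frequently_atTop] at hfreq
      obtain ⟨i₀, hi₀N, hα⟩ := hfreq N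
      have hT : T0 M (drun M M.q0 w i₀) (wshift w i₀) := by
        intro j
        have hdi : drun M (drun M M.q0 w i₀) (wshift w i₀) j = drun M M.q0 w (i₀ + j) :=
          (drun_add M M.q0 w i₀ j).symm
        rw [hdi]
        exact mutd_trans (mutd_symm (hN i₀ hi₀N)) (hN (i₀ + j) (by omega))
      have hmem : wshift w i₀ ∈ M.LangFrom (drun M M.q0 w i₀) := hα _ hT
      show w ∈ M.LangFrom M.q0
      exact (mem_shift hSD (drun_isRun M M.q0 w) i₀).mpr hmem
    · intro hw
      obtain ⟨N, hN⟩ := exists_trap M M.q0 w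
      show ∃ᶠ i in Filter.atTop, _ ∈ alphaD M
      rw [Filter.frequently_atTop]
      intro n
      refine ⟨max n N, le_max_left n N, ?_⟩
      rw [hrun]
      intro w' hTw'
      have hT : T0 M (drun M M.q0 w (max n N)) (wshift w (max n N)) := by
        intro j
        have hdi : drun M (drun M M.q0 w (max n N)) (wshift w (max n N)) j
            = drun M M.q0 w (max n N + j) := (drun_add M M.q0 w (max n N) j).symm
        rw [hdi]
        exact mutd_trans (mutd_symm (hN (max n N) (le_max_right n N)))
          (hN (max n N + j) (by omega))
      have hv : wshift w (max n N) ∈ M.LangFrom (drun M M.q0 w (max n N)) :=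
        (mem_shift hSD (drun_isRun M M.q0 w) (max n N)).mp hw
      exact cor_trapped M hweak hSD hv hT hTw'
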